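/- arXiv:2305.06479 — 2 statements merged into one kernel-verified Lean document; each statement's English description precedes it below -/
import Mathlib

section
/- Let A be a 3-by-3 reciprocal matrix with entries a_{12}, a_{13}, a_{23} above the diagonal. A positive vector w = (w_1, w_2, w_3) is efficient for A if and only if (a_{23} w_3 <= w_2 <= w_1/a_{12} <= (a_{13}/a_{12}) w_3) or (a_{23} w_3 >= w_2 >= w_1/a_{12} >= (a_{13}/a_{12}) w_3). -/
/-!
Compare the cyclic ratios `w 0 / w 1`, `w 1 / w 2`, `w 2 / w 0` with `A 0 1`, `A 1 2`, `A 2 0`;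
the condition says they lie all weakly above or all weakly below. In that case a vector `v`
dominating `w` has its cyclic ratios on the same side of those of `w`, and since both products
of cyclic ratios equal `1` they coincide. Otherwise there are strict deviations of both signs; in
a triangle they sit on adjacent edges, so at the common vertex `i` both ratios `w i / w j` deviate
from `A i j` in the same direction, and rescaling `w i` alone gives a dominating vector with
different ratios.
-/

/-- A positive reciprocal (pairwise comparison) matrix. -/
def Reciprocal {n : ℕ} (A : Matrix (Fin n) (Fin n) ℝ) : Prop :=
  (∀ i j, 0 < A i j) ∧ ∀ i j, A j i = (A i j)⁻¹

/-- A positive vector `w` is efficient for `A` (Pareto optimality). -/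
def Efficient {n : ℕ} (A : Matrix (Fin n) (Fin n) ℝ) (w : Fin n → ℝ) : Prop :=
  (∀ i, 0 < w i) ∧ ∀ v : Fin n → ℝ, (∀ i, 0 < v i) →
    (∀ i j, |A i j - v i / v j| ≤ |A i j - w i / w j|) →
    ∀ i j, v i / v j = w i / w j

lemma abs_sub_le_abs_sub_of_le_of_le {a q x : ℝ} (haq : a ≤ q) (hqx : q ≤ x) :
    |a - q| ≤ |a - x| := by
  rw [abs_sub_comm a q, abs_sub_comm a x]
  exact Set.abs_sub_left_of_mem_uIcc (Set.mem_uIcc_of_le haq hqx)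

lemma abs_inv_sub_inv_le_of_le_of_le {a q x : ℝ} (ha : 0 < a) (haq : a ≤ q) (hqx : q ≤ x) :
    |a⁻¹ - q⁻¹| ≤ |a⁻¹ - x⁻¹| :=
  Set.abs_sub_right_of_mem_uIcc
    (Set.mem_uIcc_of_le (inv_anti₀ (ha.trans_le haq) hqx) (inv_anti₀ ha haq))

lemma le_of_abs_sub_le_abs_sub {a p x : ℝ} (hax : a ≤ x) (h : |a - p| ≤ |a - x|) : p ≤ x := by
  rw [abs_of_nonpos (sub_nonpos.2 hax)] at h
  linarith [neg_abs_le (a - p)]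

lemma ge_of_abs_sub_le_abs_sub {a p x : ℝ} (hxa : x ≤ a) (h : |a - p| ≤ |a - x|) : x ≤ p := by
  rw [abs_of_nonneg (sub_nonneg.2 hxa)] at h
  linarith [le_abs_self (a - p)]

lemma eq_and_eq_of_le_of_mul_eq {p q r x y z : ℝ} (hp : 0 < p) (hq : 0 < q) (hr : 0 < r)
    (hpx : p ≤ x) (hqy : q ≤ y) (hrz : r ≤ z) (h : p * q * r = x * y * z) : p = x ∧ q = y := by
  have hx : 0 < x := hp.trans_le hpx
  refine ⟨le_antisymm hpx ?_, le_antisymm hqy ?_⟩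
  · nlinarith [mul_le_mul hqy hrz hr.le (hq.trans_le hqy).le, mul_pos hq hr]
  · nlinarith [mul_le_mul hpx hrz hr.le hx.le, mul_pos hp hr]

section Reciprocal

open Matrix

variable {n : ℕ} {A : Matrix (Fin n) (Fin n) ℝ} {w : Fin n → ℝ}

lemma Reciprocal.transpose (hA : Reciprocal A) : Reciprocal Aᵀ :=
  ⟨fun i j => hA.1 j i, fun i j => by simp [hA.2 i j]⟩

lemma Reciprocal.lt_div_iff_div_lt (hA : Reciprocal A) (hw : ∀ i, 0 < w i) (i j : Fin n) :
    A j i < w j / w i ↔ w i / w j < A i j := by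
  rw [hA.2 i j, ← inv_div, inv_lt_inv₀ (hA.1 i j) (div_pos (hw i) (hw j))]

lemma Efficient.transpose_inv (hE : Efficient A w) : Efficient Aᵀ w⁻¹ := by
  refine ⟨fun i => inv_pos.2 (hE.1 i), fun v hv hdom i j => ?_⟩
  have hdom' : ∀ i j, |A i j - v⁻¹ i / v⁻¹ j| ≤ |A i j - w i / w j| := fun i j => by
    simpa only [transpose_apply, Pi.inv_apply, inv_div_inv] using hdom j i
  simpa only [Pi.inv_apply, inv_div_inv] using hE.2 v⁻¹ (fun i => inv_pos.2 (hv i)) hdom' j i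

/-- Shrinking `w i` by the factor `t = max_{j ≠ i} A i j / (w i / w j) < 1` moves every ratio in
row and column `i` weakly towards `A` while changing it. -/
theorem not_efficient_of_forall_lt_div [Nontrivial (Fin n)] (hA : Reciprocal A)
    (hw : ∀ i, 0 < w i) {i : Fin n} (h : ∀ j ≠ i, A i j < w i / w j) : ¬ Efficient A w := by
  intro hE
  obtain ⟨j₀, hj₀⟩ := exists_ne i
  have hne : (Finset.univ.erase i).Nonempty := ⟨j₀, Finset.mem_erase.2 ⟨hj₀, Finset.mem_univ _⟩⟩
  set t := (Finset.univ.erase i).sup' hne fun j => A i j / (w i / w j)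
  have hle : ∀ j ≠ i, A i j ≤ t * (w i / w j) := fun j hj => by
    rw [← div_le_iff₀ (div_pos (hw i) (hw j))]
    exact Finset.le_sup' (fun j => A i j / (w i / w j)) (Finset.mem_erase.2 ⟨hj, Finset.mem_univ _⟩)
  have ht1 : t < 1 := (Finset.sup'_lt_iff hne).2 fun j hj =>
    (div_lt_one (div_pos (hw i) (hw j))).2 (h j (Finset.ne_of_mem_erase hj))
  have ht0 : 0 < t :=
    pos_of_mul_pos_left ((hA.1 i j₀).trans_le (hle j₀ hj₀)) (div_pos (hw i) (hw j₀)).le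
  have hmid : ∀ j ≠ i, t * (w i / w j) ≤ w i / w j := fun j _ =>
    mul_le_of_le_one_left (div_pos (hw i) (hw j)).le ht1.le
  set v := Function.update w i (t * w i)
  have hvi : v i = t * w i := Function.update_self ..
  have hvj : ∀ j ≠ i, v j = w j := fun j hj => Function.update_of_ne hj ..
  have hv : ∀ j, 0 < v j := fun j => by
    rcases eq_or_ne j i with rfl | hj
    · rw [hvi]; exact mul_pos ht0 (hw j)
    · rw [hvj j hj]; exact hw j
  have hdom : ∀ p q, |A p q - v p / v q| ≤ |A p q - w p / w q| := fun p q => by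
    rcases eq_or_ne q p with rfl | hqp
    · rw [div_self (hv q).ne', div_self (hw q).ne']
    rcases eq_or_ne p i with rfl | hp
    · rw [hvi, hvj q hqp, mul_div_assoc]
      exact abs_sub_le_abs_sub_of_le_of_le (hle q hqp) (hmid q hqp)
    rcases eq_or_ne q i with rfl | hq
    · rw [hvi, hvj p hp, hA.2 q p, ← inv_div, ← inv_div (w q), mul_div_assoc]
      exact abs_inv_sub_inv_le_of_le_of_le (hA.1 q p) (hle p hp) (hmid p hp)
    · rw [hvj p hp, hvj q hq]
  have heq := hE.2 v hv hdom i j₀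
  rw [hvi, hvj j₀ hj₀, mul_div_assoc] at heq
  exact ht1.ne (mul_eq_right₀ (div_pos (hw i) (hw j₀)).ne' |>.1 heq)

theorem not_efficient_of_forall_div_lt [Nontrivial (Fin n)] (hA : Reciprocal A)
    (hw : ∀ i, 0 < w i) {i : Fin n} (h : ∀ j ≠ i, w i / w j < A i j) : ¬ Efficient A w :=
  fun hE => not_efficient_of_forall_lt_div hA.transpose (fun j => inv_pos.2 (hw j))
    (fun j hj => by simpa only [transpose_apply, Pi.inv_apply, inv_div_inv,
      hA.lt_div_iff_div_lt hw] using h j hj) hE.transpose_inv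

end Reciprocal

section Three

variable {A : Matrix (Fin 3) (Fin 3) ℝ} {v w : Fin 3 → ℝ}

lemma Fin.forall_ne_of_three {P : Fin 3 → Prop} {i j k : Fin 3} (hj : P j) (hk : P k)
    (hij : i ≠ j := by decide) (hik : i ≠ k := by decide) (hjk : j ≠ k := by decide) :
    ∀ p ≠ i, P p := by
  intro p hp
  obtain rfl | rfl : p = j ∨ p = k := by omega
  exacts [hj, hk]

lemma cycle_div_prod (hv : ∀ i, 0 < v i) : v 0 / v 1 * (v 1 / v 2) * (v 2 / v 0) = 1 := by
  field_simp [(hv 0).ne', (hv 1).ne', (hv 2).ne']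

lemma div_eq_div_of_cycle (hv : ∀ i, 0 < v i) (hw : ∀ i, 0 < w i)
    (h01 : v 0 / v 1 = w 0 / w 1) (h12 : v 1 / v 2 = w 1 / w 2) (i j : Fin 3) :
    v i / v j = w i / w j := by
  rw [div_eq_div_iff (hv 1).ne' (hw 1).ne'] at h01
  rw [div_eq_div_iff (hv 2).ne' (hw 2).ne'] at h12
  have hprop : ∀ k, v k = v 2 / w 2 * w k := by
    have h1 : v 1 = v 2 / w 2 * w 1 := by
      rw [div_mul_eq_mul_div, eq_div_iff (hw 2).ne']; linarith
    have h0 : v 0 = v 2 / w 2 * w 0 := mul_right_cancel₀ (hw 1).ne' <| by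
      rw [h01, h1]; ring
    intro k; fin_cases k
    exacts [h0, h1, (div_mul_cancel₀ _ (hw 2).ne').symm]
  rw [hprop i, hprop j, mul_div_mul_left _ _ (div_pos (hv 2) (hw 2)).ne']

theorem efficient_of_le_cycle (hw : ∀ i, 0 < w i) (h01 : A 0 1 ≤ w 0 / w 1)
    (h12 : A 1 2 ≤ w 1 / w 2) (h20 : A 2 0 ≤ w 2 / w 0) : Efficient A w := by
  refine ⟨hw, fun v hv hdom => ?_⟩
  obtain ⟨e01, e12⟩ := eq_and_eq_of_le_of_mul_eq (div_pos (hv 0) (hv 1)) (div_pos (hv 1) (hv 2))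
    (div_pos (hv 2) (hv 0)) (le_of_abs_sub_le_abs_sub h01 (hdom 0 1))
    (le_of_abs_sub_le_abs_sub h12 (hdom 1 2)) (le_of_abs_sub_le_abs_sub h20 (hdom 2 0))
    (by rw [cycle_div_prod hv, cycle_div_prod hw])
  exact div_eq_div_of_cycle hv hw e01 e12

theorem efficient_of_cycle_le (hw : ∀ i, 0 < w i) (h01 : w 0 / w 1 ≤ A 0 1)
    (h12 : w 1 / w 2 ≤ A 1 2) (h20 : w 2 / w 0 ≤ A 2 0) : Efficient A w := by
  refine ⟨hw, fun v hv hdom => ?_⟩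
  obtain ⟨e01, e12⟩ := eq_and_eq_of_le_of_mul_eq (div_pos (hw 0) (hw 1)) (div_pos (hw 1) (hw 2))
    (div_pos (hw 2) (hw 0)) (ge_of_abs_sub_le_abs_sub h01 (hdom 0 1))
    (ge_of_abs_sub_le_abs_sub h12 (hdom 1 2)) (ge_of_abs_sub_le_abs_sub h20 (hdom 2 0))
    (by rw [cycle_div_prod hv, cycle_div_prod hw])
  exact div_eq_div_of_cycle hv hw e01.symm e12.symm

/-- A sign change along the cycle `0 → 1 → 2 → 0` puts two strict deviations of opposite signs on
adjacent edges; at their common vertex both ratios deviate from `A` in the same direction. -/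
theorem Efficient.le_cycle_or_cycle_le (hA : Reciprocal A) (hE : Efficient A w) :
    (A 0 1 ≤ w 0 / w 1 ∧ A 1 2 ≤ w 1 / w 2 ∧ A 2 0 ≤ w 2 / w 0) ∨
      (w 0 / w 1 ≤ A 0 1 ∧ w 1 / w 2 ≤ A 1 2 ∧ w 2 / w 0 ≤ A 2 0) := by
  have hw := hE.1
  have hrec := hA.lt_div_iff_div_lt hw
  by_contra hne
  have hlt : w 0 / w 1 < A 0 1 ∨ w 1 / w 2 < A 1 2 ∨ w 2 / w 0 < A 2 0 := by
    by_contra! h; exact hne (.inl h)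
  have hgt : A 0 1 < w 0 / w 1 ∨ A 1 2 < w 1 / w 2 ∨ A 2 0 < w 2 / w 0 := by
    by_contra! h; exact hne (.inr h)
  rcases hlt with h | h | h <;> rcases hgt with h' | h' | h'
  · exact (lt_asymm h h').elim
  · exact not_efficient_of_forall_lt_div hA hw (i := 1)
      (Fin.forall_ne_of_three ((hrec 0 1).2 h) h') hE
  · exact not_efficient_of_forall_div_lt hA hw (i := 0)
      (Fin.forall_ne_of_three h ((hrec 0 2).1 h')) hE
  · exact not_efficient_of_forall_div_lt hA hw (i := 1)
      (Fin.forall_ne_of_three ((hrec 1 0).1 h') h) hE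
  · exact (lt_asymm h h').elim
  · exact not_efficient_of_forall_lt_div hA hw (i := 2)
      (Fin.forall_ne_of_three h' ((hrec 1 2).2 h)) hE
  · exact not_efficient_of_forall_lt_div hA hw (i := 0)
      (Fin.forall_ne_of_three h' ((hrec 2 0).2 h)) hE
  · exact not_efficient_of_forall_div_lt hA hw (i := 2)
      (Fin.forall_ne_of_three h ((hrec 2 1).1 h')) hE
  · exact (lt_asymm h h').elim

end Three

theorem stmt_4_general (A : Matrix (Fin 3) (Fin 3) ℝ) (hA : Reciprocal A)
    (w : Fin 3 → ℝ) (hw : ∀ i, 0 < w i) :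
    Efficient A w ↔
      (A 1 2 * w 2 ≤ w 1 ∧ w 1 ≤ w 0 / A 0 1 ∧ w 0 / A 0 1 ≤ (A 0 2 / A 0 1) * w 2) ∨
      (A 1 2 * w 2 ≥ w 1 ∧ w 1 ≥ w 0 / A 0 1 ∧ w 0 / A 0 1 ≥ (A 0 2 / A 0 1) * w 2) := by
  have ha01 := hA.1 0 1
  have h20 : A 2 0 = (A 0 2)⁻¹ := hA.2 0 2
  have e12 : A 1 2 * w 2 ≤ w 1 ↔ A 1 2 ≤ w 1 / w 2 := (le_div_iff₀ (hw 2)).symm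
  have e01 : w 1 ≤ w 0 / A 0 1 ↔ A 0 1 ≤ w 0 / w 1 := by
    rw [le_div_iff₀ ha01, le_div_iff₀ (hw 1), mul_comm]
  have e20 : w 0 / A 0 1 ≤ A 0 2 / A 0 1 * w 2 ↔ A 2 0 ≤ w 2 / w 0 := by
    rw [div_mul_eq_mul_div, div_le_div_iff_of_pos_right ha01, h20, ← one_div,
      div_le_div_iff₀ (hA.1 0 2) (hw 0), one_mul, mul_comm (w 2)]
  have f12 : A 1 2 * w 2 ≥ w 1 ↔ w 1 / w 2 ≤ A 1 2 := (div_le_iff₀ (hw 2)).symm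
  have f01 : w 1 ≥ w 0 / A 0 1 ↔ w 0 / w 1 ≤ A 0 1 := by
    rw [ge_iff_le, div_le_iff₀ ha01, div_le_iff₀ (hw 1), mul_comm]
  have f20 : w 0 / A 0 1 ≥ A 0 2 / A 0 1 * w 2 ↔ w 2 / w 0 ≤ A 2 0 := by
    rw [ge_iff_le, div_mul_eq_mul_div, div_le_div_iff_of_pos_right ha01, h20, ← one_div,
      div_le_div_iff₀ (hw 0) (hA.1 0 2), one_mul, mul_comm (w 2)]
  rw [e12, e01, e20, f12, f01, f20, and_left_comm, and_left_comm (b := w 0 / w 1 ≤ A 0 1)]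
  refine ⟨Efficient.le_cycle_or_cycle_le hA, ?_⟩
  rintro (⟨h01, h12, h20⟩ | ⟨h01, h12, h20⟩)
  exacts [efficient_of_le_cycle hw h01 h12 h20, efficient_of_cycle_le hw h01 h12 h20]

/-- Characterization of efficient vectors for a 3-by-3 reciprocal matrix. -/
theorem stmt_4 (A : Matrix (Fin 3) (Fin 3) ℝ) (hA : Reciprocal A)
    (hdiag : ∀ i, A i i = 1) (w : Fin 3 → ℝ) (hw : ∀ i, 0 < w i) :
    Efficient A w ↔
      (A 1 2 * w 2 ≤ w 1 ∧ w 1 ≤ w 0 / A 0 1 ∧ w 0 / A 0 1 ≤ (A 0 2 / A 0 1) * w 2) ∨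
      (A 1 2 * w 2 ≥ w 1 ∧ w 1 ≥ w 0 / A 0 1 ∧ w 0 / A 0 1 ≥ (A 0 2 / A 0 1) * w 2) :=
  stmt_4_general A hA w hw
end

section
/- Let A be the n-by-n reciprocal matrix of block form [[B, J],[J, J]], n >= 4, where B is the 3-by-3 reciprocal matrix with above-diagonal entries a_{12}, a_{13}, a_{23} and a_{13} >= 1. Let q = a_{13} - a_{23} a_{12}. If a_{12} >= 1, a_{23} >= 1, and q <= 0, then the Perron eigenvector of A is efficient for A. -/
section Efficiency

variable {n : ℕ} {A : Matrix (Fin n) (Fin n) ℝ} {w v : Fin n → ℝ}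

lemma le_of_abs_sub_le_abs_sub_s15 {a s t : ℝ} (has : a ≤ s) (h : |a - t| ≤ |a - s|) : t ≤ s := by
  rw [abs_sub_comm a s, abs_of_nonneg (sub_nonneg.2 has)] at h
  linarith [le_abs_self (t - a), abs_sub_comm a t]

lemma div_le_div_of_dominating_edge (hw : ∀ i, 0 < w i) (hv : ∀ i, 0 < v i) {i j : Fin n}
    (hedge : A i j ≤ w i / w j) (hdom : |A i j - v i / v j| ≤ |A i j - w i / w j|) :
    v i / w i ≤ v j / w j := by
  have hratio := le_of_abs_sub_le_abs_sub_s15 hedge hdom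
  rw [div_le_div_iff₀ (hv j) (hw j)] at hratio
  rw [div_le_div_iff₀ (hw i) (hw j)]
  linarith

theorem efficient_of_reflTransGen (hw : ∀ i, 0 < w i)
    (hconn : ∀ i j, Relation.ReflTransGen (fun i j => A i j ≤ w i / w j) i j) :
    Efficient A w := by
  refine ⟨hw, fun v hv hdom i j => ?_⟩
  have hmono : ∀ i j, v i / w i ≤ v j / w j := by
    intro i j
    induction hconn i j with
    | refl => exact le_rfl
    | tail _ hedge ih => exact ih.trans (div_le_div_of_dominating_edge hw hv hedge (hdom _ _))
  have hij : v i * w j = v j * w i :=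
    (div_eq_div_iff (hw i).ne' (hw j).ne').1 ((hmono i j).antisymm (hmono j i))
  rw [div_eq_div_iff (hv j).ne' (hw j).ne']
  linarith

end Efficiency

section Eigenvector

variable {ι : Type*} [Fintype ι] {A : Matrix ι ι ℝ} {w : ι → ℝ} {μ : ℝ}

lemma eigenvalue_pos_of_forall_pos [Nonempty ι] (hA : ∀ i j, 0 < A i j) (hw : ∀ i, 0 < w i)
    (heig : A.mulVec w = μ • w) : 0 < μ := by
  obtain ⟨i⟩ := ‹Nonempty ι›
  have hrow : 0 < μ * w i := by
    rw [← smul_eq_mul, ← Pi.smul_apply, ← heig]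
    exact Finset.sum_pos (fun k _ => mul_pos (hA i k) (hw k)) Finset.univ_nonempty
  exact pos_of_mul_pos_left hrow (hw i).le

lemma le_mul_of_row_le_mul (heig : A.mulVec w = μ • w) (hμ : 0 < μ) (hw : ∀ k, 0 ≤ w k) {i j : ι}
    {t : ℝ} (hrow : ∀ k, A j k ≤ t * A i k) : w j ≤ t * w i := by
  refine le_of_mul_le_mul_left ?_ hμ
  rw [mul_left_comm]
  calc μ * w j = ∑ k, A j k * w k := by rw [← smul_eq_mul, ← Pi.smul_apply, ← heig]; rfl
    _ ≤ ∑ k, t * A i k * w k :=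
      Finset.sum_le_sum fun k _ => mul_le_mul_of_nonneg_right (hrow k) (hw k)
    _ = t * (μ * w i) := by
      rw [← smul_eq_mul μ, ← Pi.smul_apply, ← heig]
      simp only [Matrix.mulVec, dotProduct, Finset.mul_sum, mul_assoc]

end Eigenvector

lemma Reciprocal.le_div_of_row_le {n : ℕ} {A : Matrix (Fin n) (Fin n) ℝ} {w : Fin n → ℝ} {μ : ℝ}
    (hA : Reciprocal A) (hw : ∀ k, 0 < w k) (heig : A.mulVec w = μ • w) (i j : Fin n)
    (hrow : ∀ k, A j k ≤ A j i * A i k) : A i j ≤ w i / w j := by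
  have : Nonempty (Fin n) := ⟨i⟩
  have hμ := eigenvalue_pos_of_forall_pos hA.1 hw heig
  rw [hA.2 j i, le_div_iff₀ (hw j), inv_mul_le_iff₀ (hA.1 j i)]
  exact le_mul_of_row_le_mul heig hμ (fun k => (hw k).le) hrow

lemma Fin.forall_of_three_le {n : ℕ} (hn : 3 ≤ n) {P : Fin n → Prop} (h0 : P ⟨0, by omega⟩)
    (h1 : P ⟨1, by omega⟩) (h2 : P ⟨2, by omega⟩) (hrest : ∀ k : Fin n, 3 ≤ k.val → P k) :
    ∀ k, P k := by
  rintro ⟨k, hk⟩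
  match k with
  | 0 => exact h0
  | 1 => exact h1
  | 2 => exact h2
  | k + 3 => exact hrest _ (by simp)

lemma reflTransGen_of_cycles {n : ℕ} (hn : 3 < n) {E : Fin n → Fin n → Prop}
    (h0k : ∀ k : Fin n, 3 ≤ k.val → E ⟨0, by omega⟩ k)
    (hk2 : ∀ k : Fin n, 3 ≤ k.val → E k ⟨2, by omega⟩)
    (h21 : E ⟨2, by omega⟩ ⟨1, by omega⟩) (h10 : E ⟨1, by omega⟩ ⟨0, by omega⟩) :
    ∀ i j, Relation.ReflTransGen E i j := by
  have h02 : Relation.ReflTransGen E ⟨0, by omega⟩ ⟨2, by omega⟩ :=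
    .tail (.single (h0k ⟨3, by omega⟩ le_rfl)) (hk2 ⟨3, by omega⟩ le_rfl)
  have h20 : Relation.ReflTransGen E ⟨2, by omega⟩ ⟨0, by omega⟩ := .tail (.single h21) h10
  have hto : ∀ i, Relation.ReflTransGen E i ⟨0, by omega⟩ :=
    Fin.forall_of_three_le (by omega) .refl (.single h10) h20 fun k hk => .head (hk2 k hk) h20
  have hfrom : ∀ i, Relation.ReflTransGen E ⟨0, by omega⟩ i :=
    Fin.forall_of_three_le (by omega) .refl (h02.tail h21) h02 fun k hk => .single (h0k k hk)
  exact fun i j => (hto i).trans (hfrom j)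

/-- Sufficient condition (case 1) for the efficiency of the Perron eigenvector
of a 3-block perturbed consistent matrix:
`a₁₂ ≥ 1`, `a₂₃ ≥ 1` and `q = a₁₃ - a₂₃ a₁₂ ≤ 0`. -/
theorem stmt_15 {n : ℕ} (hn : 4 ≤ n) (A : Matrix (Fin n) (Fin n) ℝ)
    (hA : Reciprocal A)
    (hblock : ∀ i j : Fin n, 3 ≤ i.val ∨ 3 ≤ j.val → A i j = 1)
    (hdiag : ∀ i, A i i = 1)
    (a12 a13 a23 : ℝ)
    (h12 : A ⟨0, by omega⟩ ⟨1, by omega⟩ = a12)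
    (h13 : A ⟨0, by omega⟩ ⟨2, by omega⟩ = a13)
    (h23 : A ⟨1, by omega⟩ ⟨2, by omega⟩ = a23)
    (ha13 : 1 ≤ a13) (ha12 : 1 ≤ a12) (ha23 : 1 ≤ a23)
    (hq : a13 - a23 * a12 ≤ 0)
    (w : Fin n → ℝ) (hw : ∀ i, 0 < w i) (μ : ℝ)
    (heig : A.mulVec w = μ • w) :
    Efficient A w := by
  have h21 : A ⟨1, by omega⟩ ⟨0, by omega⟩ = a12⁻¹ := by rw [hA.2, h12]
  have h31 : A ⟨2, by omega⟩ ⟨0, by omega⟩ = a13⁻¹ := by rw [hA.2, h13]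
  have h32 : A ⟨2, by omega⟩ ⟨1, by omega⟩ = a23⁻¹ := by rw [hA.2, h23]
  have hrow : ∀ k m : Fin n, 3 ≤ k.val → A k m = 1 := fun k m hk => hblock k m (.inl hk)
  have hcol : ∀ k m : Fin n, 3 ≤ m.val → A k m = 1 := fun k m hm => hblock k m (.inr hm)
  have h13inv : a13⁻¹ ≤ 1 := inv_le_one_of_one_le₀ ha13
  have h23inv : a23⁻¹ ≤ 1 := inv_le_one_of_one_le₀ ha23
  have h12inv : a12⁻¹ ≤ a23 * a13⁻¹ := by
    rw [← div_eq_mul_inv, le_div_iff₀ (by linarith), inv_mul_le_iff₀ (by linarith)]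
    linarith
  have edge := hA.le_div_of_row_le hw heig
  refine efficient_of_reflTransGen hw
    (reflTransGen_of_cycles hn (fun k hk => ?_) (fun k hk => ?_) ?_ ?_)
  all_goals
    refine edge _ _ (Fin.forall_of_three_le (by omega) ?_ ?_ ?_ fun m hm => ?_)
    all_goals
      simp (disch := assumption) only [hrow, hcol, hdiag, h12, h13, h23, h21, h31, h32,
        mul_inv_cancel₀ (show a12 ≠ 0 by positivity), mul_inv_cancel₀ (show a23 ≠ 0 by positivity),
        one_mul, mul_one]
      linarith
end
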